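/- Let r ≥ 1. Let ♮ : Λ̂(r)[q] → ℂ[q][[x]] be the unique continuous ℂ[q]-algebra homomorphism sending p_1(1) to x and p_i(ζ) to 0 for all (i,ζ) ≠ (1,1). Then for all f ∈ Λ̂(r)[q] and all g ∈ Λ̂(1)[q] lying in the augmentation ideal (every term of g has positive degree in the p_j), one has (f ∘ g)^♮ = f^♮(g^♮), where the right-hand side is the power series obtained by substituting g^♮ ∈ ℂ[q][[x]] for x in f^♮. -/

import Mathlib

open scoped Classical

noncomputable section

/-- The group `μ_r` of complex `r`-th roots of unity. -/
abbrev mu (r : ℕ) : Type := rootsOfUnity r ℂ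

/-- Index type for the indeterminates `p_i(ζ)` of `Λ̂(r)`. -/
abbrev PVar (r : ℕ) : Type := ℕ+ × mu r

/-- `Λ̂(r)[q]`: formal power series in the `p_i(ζ)` (indexed by `Sum.inl`) and the extra
variable `q` (indexed by `Sum.inr ()`). -/
abbrev LambdaQ (r : ℕ) : Type := MvPowerSeries (PVar r ⊕ Unit) ℂ

/-- `Λ̂(1)[q]`: formal power series in the `p_j = p_j(1)` (indexed by `Sum.inl`) and `q`. -/
abbrev Lambda1Q : Type := MvPowerSeries (ℕ+ ⊕ Unit) ℂ

/-- `ℂ[q][[x]]`: power series in `x` (indexed by `Sum.inl ()`) and `q` (`Sum.inr ()`). -/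
abbrev QX : Type := MvPowerSeries (Unit ⊕ Unit) ℂ

/-- Substitution of the family `φ` into a multivariate formal power series `f`:
the unique continuous `ℂ`-algebra homomorphism sending `X s` to `φ s`. -/
def ssubst {σ τ : Type*} (φ : σ → MvPowerSeries τ ℂ) (f : MvPowerSeries σ ℂ) :
    MvPowerSeries τ ℂ :=
  fun m => ∑ᶠ d : σ →₀ ℕ,
    MvPowerSeries.coeff d f * MvPowerSeries.coeff m (d.prod fun s k => φ s ^ k)

/-- The series `p_i(ζ) ∘ g`, obtained from `g ∈ Λ̂(1)[q]` by replacing each `p_j` by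
`p_{ij}(ζ^j)` and `q` by `q^i`. -/
def gsub {r : ℕ} (i : ℕ+) (ζ : mu r) (g : Lambda1Q) : LambdaQ r :=
  ssubst (fun v => match v with
    | Sum.inl j => (MvPowerSeries.X (Sum.inl (i * j, ζ ^ (j : ℕ))) : LambdaQ r)
    | Sum.inr _ => (MvPowerSeries.X (Sum.inr ()) : LambdaQ r) ^ (i : ℕ)) g

/-- The plethysm `f ∘ g : Λ̂(r)[q] × Λ̂(1)[q]_+ → Λ̂(r)[q]`: the unique continuous
`ℂ[q]`-algebra homomorphism in `f` sending `p_i(ζ)` to `p_i(ζ) ∘ g`. -/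
def plethRQ {r : ℕ} (f : LambdaQ r) (g : Lambda1Q) : LambdaQ r :=
  ssubst (fun v => match v with
    | Sum.inl p => gsub p.1 p.2 g
    | Sum.inr _ => (MvPowerSeries.X (Sum.inr ()) : LambdaQ r)) f

/-- The specialization `♮ : Λ̂(r)[q] → ℂ[q][[x]]`: the unique continuous `ℂ[q]`-algebra
homomorphism sending `p_1(1)` to `x` and all other `p_i(ζ)` to `0`. -/
def natR {r : ℕ} (f : LambdaQ r) : QX :=
  ssubst (fun v => match v with
    | Sum.inl p => if p.1 = 1 ∧ p.2 = 1 then (MvPowerSeries.X (Sum.inl ()) : QX) else 0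
    | Sum.inr _ => (MvPowerSeries.X (Sum.inr ()) : QX)) f

/-- The specialization `♮ : Λ̂(1)[q] → ℂ[q][[x]]` sending `p_1` to `x` and `p_j` (`j ≥ 2`)
to `0`. -/
def nat1 (g : Lambda1Q) : QX :=
  ssubst (fun v => match v with
    | Sum.inl j => if j = 1 then (MvPowerSeries.X (Sum.inl ()) : QX) else 0
    | Sum.inr _ => (MvPowerSeries.X (Sum.inr ()) : QX)) g

/-!
The specialization `♮` only reads off the coefficients of the monomials in `p_1(1)` and `q`:
it is the ring homomorphism `MvPowerSeries.killCompl` along the embedding `x ↦ p_1(1)`,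
`q ↦ q`, and as such it commutes with substitution. So `(f ∘ g)^♮` is the substitution into `f`
of the series `(p_i(ζ) ∘ g)^♮`. For `(i, ζ) = (1, 1)` this is `g^♮`; otherwise every
`p_{ij}(ζ^j)` is killed, and since `g` has no term free of the `p_j`, `(p_i(ζ) ∘ g)^♮ = 0`.
Substituting with these values factors through `killCompl` again, which gives `f^♮(g^♮)`.
-/

theorem Finsupp.prod_pow_eq_zero {α M : Type*} [CommMonoidWithZero M] {d : α →₀ ℕ}
    {φ : α → M} {a : α} (ha : d a ≠ 0) (hφ : φ a = 0) : d.prod (fun s k => φ s ^ k) = 0 :=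
  Finset.prod_eq_zero (Finsupp.mem_support_iff.2 ha) (by rw [hφ, zero_pow ha] : φ a ^ d a = 0)

section Substitution

open MvPowerSeries

variable {σ τ ι : Type*}

theorem coeff_ssubst (φ : σ → MvPowerSeries τ ℂ) (f : MvPowerSeries σ ℂ) (m : τ →₀ ℕ) :
    coeff m (ssubst φ f) = ∑ᶠ d : σ →₀ ℕ, coeff d f * coeff m (d.prod fun s k => φ s ^ k) :=
  rfl

theorem ssubst_X (f : MvPowerSeries σ ℂ) : ssubst X f = f := by
  ext m
  rw [coeff_ssubst, finsum_eq_single _ m fun d hd => ?_]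
  · rw [← monomial_one_eq, coeff_monomial_same, mul_one]
  · rw [← monomial_one_eq, coeff_monomial_ne (Ne.symm hd), mul_zero]

theorem killCompl_ssubst (e : τ ↪ σ) (φ : ι → MvPowerSeries σ ℂ) (f : MvPowerSeries ι ℂ) :
    killCompl e (ssubst φ f) = ssubst (fun s => killCompl e (φ s)) f := by
  ext m
  simp only [coeff_killCompl, coeff_ssubst, ← map_pow, ← map_finsuppProd]

theorem ssubst_killCompl (e : τ ↪ σ) {ψ : τ → MvPowerSeries ι ℂ} {χ : σ → MvPowerSeries ι ℂ}
    (hχ : ∀ t, χ (e t) = ψ t) (hχ₀ : ∀ s ∉ Set.range e, χ s = 0) (f : MvPowerSeries σ ℂ) :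
    ssubst ψ (killCompl e f) = ssubst χ f := by
  ext m
  set F : (σ →₀ ℕ) → ℂ := fun d => coeff d f * coeff m (d.prod fun s k => χ s ^ k)
  have hF : ∀ d ∉ Set.range (Finsupp.embDomain e), F d = 0 := by
    intro d hd
    rw [Finsupp.mem_range_embDomain_iff, Set.not_subset] at hd
    obtain ⟨s, hs, hse⟩ := hd
    simp only [F, Finsupp.prod_pow_eq_zero (Finsupp.mem_support_iff.1 hs) (hχ₀ s hse),
      map_zero, mul_zero]
  calc coeff m (ssubst ψ (killCompl e f))
      = ∑ᶠ d, F (Finsupp.embDomain e d) := by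
        simp only [coeff_ssubst, coeff_killCompl, F, Finsupp.prod_embDomain, hχ]
    _ = ∑ᶠ d ∈ Set.range (Finsupp.embDomain e), F d :=
        (finsum_mem_range (Finsupp.embDomain_injective e)).symm
    _ = ∑ᶠ d, F d := by
        rw [← finsum_mem_univ F]
        refine finsum_mem_inter_support_eq' F _ _ fun d hd => ?_
        simpa using not_imp_comm.1 (hF d) hd
    _ = coeff m (ssubst χ f) := rfl

theorem ssubst_eq_zero_of_inl {κ : Type*} {φ : σ ⊕ κ → MvPowerSeries τ ℂ}
    (hφ : ∀ j, φ (Sum.inl j) = 0) {f : MvPowerSeries (σ ⊕ κ) ℂ}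
    (hf : ∀ d : (σ ⊕ κ) →₀ ℕ, (∀ j, d (Sum.inl j) = 0) → coeff d f = 0) :
    ssubst φ f = 0 := by
  ext m
  refine finsum_eq_zero_of_forall_eq_zero fun d => ?_
  by_cases hd : ∀ j, d (Sum.inl j) = 0
  · rw [hf d hd, zero_mul]
  · obtain ⟨j, hj⟩ := not_forall.1 hd
    rw [Finsupp.prod_pow_eq_zero hj (hφ j), map_zero, mul_zero]

end Substitution

section Specialization

open MvPowerSeries

def natEmb (r : ℕ) : Unit ⊕ Unit ↪ PVar r ⊕ Unit :=
  (Function.Embedding.punit ((1, 1) : PVar r)).sumMap (Function.Embedding.refl Unit)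

variable {r : ℕ}

theorem killCompl_natEmb_X_inl (i : ℕ+) (ζ : mu r) :
    killCompl (natEmb r) (X (Sum.inl (i, ζ)) : LambdaQ r)
      = if i = 1 ∧ ζ = 1 then (X (Sum.inl ()) : QX) else 0 := by
  split_ifs with h
  · obtain ⟨rfl, rfl⟩ := h
    exact killCompl_X (Sum.inl ())
  · refine killCompl_X_eq_zero ?_
    rintro ⟨_ | _, he⟩
    · cases he
      exact h ⟨rfl, rfl⟩
    · cases he

theorem killCompl_natEmb_X_inr :
    killCompl (natEmb r) (X (Sum.inr ()) : LambdaQ r) = (X (Sum.inr ()) : QX) :=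
  killCompl_X (Sum.inr ())

theorem natR_eq_killCompl (f : LambdaQ r) : natR f = killCompl (natEmb r) f := by
  calc natR f = ssubst (fun v => killCompl (natEmb r) (X v)) f := by
        rw [natR]
        congr
        funext v
        rcases v with ⟨i, ζ⟩ | _
        · exact (killCompl_natEmb_X_inl i ζ).symm
        · exact killCompl_natEmb_X_inr.symm
    _ = killCompl (natEmb r) f := by rw [← killCompl_ssubst, ssubst_X]

theorem killCompl_gsub_one (g : Lambda1Q) :
    killCompl (natEmb r) (gsub 1 (1 : mu r) g) = nat1 g := by
  rw [gsub, killCompl_ssubst, nat1]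
  congr
  funext v
  rcases v with j | _
  · simp only [killCompl_natEmb_X_inl, one_mul, one_pow, and_true]
  · rw [PNat.one_coe, pow_one, killCompl_natEmb_X_inr]

theorem killCompl_gsub_of_ne {g : Lambda1Q}
    (hg : ∀ d : (ℕ+ ⊕ Unit) →₀ ℕ, (∀ j : ℕ+, d (Sum.inl j) = 0) → coeff d g = 0)
    {i : ℕ+} {ζ : mu r} (h : ¬(i = 1 ∧ ζ = 1)) :
    killCompl (natEmb r) (gsub i ζ g) = 0 := by
  rw [gsub, killCompl_ssubst]
  refine ssubst_eq_zero_of_inl (fun j => ?_) hg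
  rw [killCompl_natEmb_X_inl, if_neg]
  rintro ⟨hij, hζ⟩
  obtain ⟨rfl, rfl⟩ : i = 1 ∧ j = 1 := by
    simpa [← PNat.coe_eq_one_iff, mul_eq_one] using congrArg PNat.val hij
  exact h ⟨rfl, by simpa using hζ⟩

end Specialization

theorem natural_specialization_pleth (r : ℕ)
    (f : LambdaQ r) (g : Lambda1Q)
    (hg : ∀ d : (ℕ+ ⊕ Unit) →₀ ℕ, (∀ j : ℕ+, d (Sum.inl j) = 0) →
      MvPowerSeries.coeff d g = 0) :
    natR (plethRQ f g)
      = ssubst (fun v => match v with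
          | Sum.inl _ => nat1 g
          | Sum.inr _ => (MvPowerSeries.X (Sum.inr ()) : QX)) (natR f) := by
  rw [natR_eq_killCompl, natR_eq_killCompl, plethRQ, killCompl_ssubst]
  refine (ssubst_killCompl (natEmb r) ?_ ?_ f).symm
  · rintro (_ | _)
    · exact killCompl_gsub_one g
    · exact killCompl_natEmb_X_inr
  · rintro (⟨i, ζ⟩ | _) hs
    · refine killCompl_gsub_of_ne hg fun ⟨(hi : i = 1), (hζ : ζ = 1)⟩ => hs ⟨Sum.inl (), ?_⟩
      rw [hi, hζ]
      rfl
    · exact absurd ⟨Sum.inr (), rfl⟩ hs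

end
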